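/- arXiv:2501.10740 — 2 statements merged into one kernel-verified Lean document; each statement's English description precedes it below -/
import Mathlib

section
/- Let A be a real n×n matrix, ε > 0, δ ∈ ℝ, D a real n×n diagonal matrix, and let E : ℝ → ℝ^{n×n} be differentiable. Suppose λ₁,…,λₙ : ℝ → ℝ and x₁,…,xₙ : ℝ → ℝⁿ are differentiable with Sym(D(A + ε E(t))) xᵢ(t) = λᵢ(t) xᵢ(t) and ‖xᵢ(t)‖ = 1 for all t and i; define γᵢ(t) = max(λᵢ(t) − δ, 0), F(t) = (1/2) Σᵢ γᵢ(t)², and G(t) = Σᵢ γᵢ(t) (D xᵢ(t)) xᵢ(t)ᵀ. If moreover ‖E(t)‖_F = 1 for all t and E satisfies E'(t) = −G(t) + ⟨G(t), E(t)⟩_F E(t), then F'(t) = −ε (‖G(t)‖_F² − ⟨G(t), E(t)⟩_F²) ≤ 0 for every t, i.e. F decays monotonically along the constrained gradient flow. -/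
open Matrix
open scoped RealInnerProductSpace

noncomputable section

/-- Frobenius inner product ⟨M, N⟩_F = tr(Nᵀ M). -/
def frobInner {n : ℕ} (M N : Matrix (Fin n) (Fin n) ℝ) : ℝ :=
  Matrix.trace (Nᵀ * M)

/-- Frobenius norm ‖M‖_F = √⟨M, M⟩_F. -/
def frobNorm {n : ℕ} (M : Matrix (Fin n) (Fin n) ℝ) : ℝ :=
  Real.sqrt (frobInner M M)

/-- Euclidean 2-norm of a vector in ℝⁿ. -/
def euclNorm {n : ℕ} (v : Fin n → ℝ) : ℝ :=
  Real.sqrt (∑ i, v i ^ 2)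

/-- The symmetric part Sym(M) = (M + Mᵀ)/2 of a square real matrix. -/
def symPart {n : ℕ} (M : Matrix (Fin n) (Fin n) ℝ) : Matrix (Fin n) (Fin n) ℝ :=
  (1/2 : ℝ) • (M + Mᵀ)

lemma frobInner_eq_sum {n : ℕ} (M N : Matrix (Fin n) (Fin n) ℝ) :
    frobInner M N = ∑ a, ∑ b, M a b * N a b := by
  simp only [frobInner, Matrix.trace, Matrix.diag, Matrix.mul_apply, Matrix.transpose_apply]
  rw [Finset.sum_comm]
  exact Finset.sum_congr rfl fun a _ => Finset.sum_congr rfl fun b _ => mul_comm _ _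

lemma maxsq_hasDerivAt (y : ℝ) : HasDerivAt (fun z : ℝ => max z 0 ^ 2) (2 * max y 0) y := by
  rcases lt_trichotomy y 0 with h | h | h
  · have hc : HasDerivAt (fun _ : ℝ => (0:ℝ)) 0 y := hasDerivAt_const _ _
    have heq : (fun z : ℝ => max z 0 ^ 2) =ᶠ[nhds y] fun _ => (0:ℝ) := by
      filter_upwards [eventually_lt_nhds h] with z hz
      rw [max_eq_right hz.le]; ring
    rw [max_eq_right h.le, mul_zero]
    exact hc.congr_of_eventuallyEq heq
  · subst h
    rw [max_self, mul_zero]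
    rw [hasDerivAt_iff_isLittleO]
    simp only [sub_zero, max_self, smul_zero, sub_zero]
    have h0 : ((0:ℝ)) ^ 2 = 0 := by norm_num
    rw [Asymptotics.isLittleO_iff]
    intro c hc
    filter_upwards [Metric.ball_mem_nhds (0:ℝ) hc] with z hz
    simp only [Metric.mem_ball, Real.dist_eq, sub_zero] at hz
    have h1 : max z 0 ^ 2 ≤ |z| * |z| := by
      rcases le_or_gt z 0 with h | h
      · rw [max_eq_right h]; simp [mul_self_nonneg]
      · rw [max_eq_left h.le, sq]; nlinarith [abs_of_pos h]
    rw [h0, sub_zero]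
    have h2 : ‖max z 0 ^ 2‖ ≤ |z| * |z| := by
      rw [Real.norm_eq_abs, abs_of_nonneg (sq_nonneg _)]; exact h1
    calc ‖max z 0 ^ 2‖ ≤ |z| * |z| := h2
      _ ≤ c * ‖z‖ := by rw [Real.norm_eq_abs]; exact mul_le_mul_of_nonneg_right hz.le (abs_nonneg _)
  · have heq : (fun z : ℝ => max z 0 ^ 2) =ᶠ[nhds y] fun z => z ^ 2 := by
      filter_upwards [eventually_gt_nhds h] with z hz
      rw [max_eq_left hz.le]
    rw [max_eq_left h.le]
    have hp : HasDerivAt (fun z : ℝ => z ^ 2) (2 * y) y := by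
      simpa using (hasDerivAt_pow 2 y)
    exact hp.congr_of_eventuallyEq heq

lemma symPart_entry {n : ℕ} (D A M : Matrix (Fin n) (Fin n) ℝ) (ε : ℝ) (j k : Fin n) :
    symPart (D * (A + ε • M)) j k
      = (1/2) * ((∑ l, D j l * (A l k + ε * M l k)) + (∑ l, D k l * (A l j + ε * M l j))) := by
  simp [symPart, Matrix.mul_apply, Matrix.add_apply, Matrix.smul_apply, Matrix.transpose_apply,
    smul_eq_mul]
  exact Finset.sum_congr rfl fun l _ => by ring

lemma symPart_entry2 {n : ℕ} (D M : Matrix (Fin n) (Fin n) ℝ) (ε : ℝ) (j k : Fin n) :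
    (ε • symPart (D * M)) j k
      = (1/2) * ((∑ l, D j l * (ε * M l k)) + (∑ l, D k l * (ε * M l j))) := by
  simp only [symPart, Matrix.smul_apply, Matrix.add_apply, Matrix.transpose_apply,
    Matrix.mul_apply, smul_eq_mul, Finset.mul_sum, mul_add]
  congr 1 <;> exact Finset.sum_congr rfl fun l _ => by ring

lemma mul_sum_mul {n : ℕ} (c d : ℝ) (f : Fin n → ℝ) :
    c * (∑ l, f l) * d = ∑ l, c * f l * d := by
  rw [Finset.mul_sum, Finset.sum_mul]

lemma sum3_rotate {n : ℕ} (F : Fin n → Fin n → Fin n → ℝ) :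
    ∑ a, ∑ b, ∑ i, F a b i = ∑ i, ∑ a, ∑ b, F a b i :=
  calc ∑ a, ∑ b, ∑ i, F a b i
      = ∑ a, ∑ i, ∑ b, F a b i := Finset.sum_congr rfl fun a _ => Finset.sum_comm
    _ = ∑ i, ∑ a, ∑ b, F a b i := Finset.sum_comm

lemma frobInner_sum_smul {n : ℕ} (M : Matrix (Fin n) (Fin n) ℝ) (c : Fin n → ℝ)
    (N : Fin n → Matrix (Fin n) (Fin n) ℝ) :
    frobInner M (∑ i, c i • N i) = ∑ i, c i * frobInner M (N i) := by
  simp only [frobInner_eq_sum, Matrix.sum_apply, Matrix.smul_apply, smul_eq_mul, Finset.mul_sum]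
  rw [sum3_rotate]
  refine Finset.sum_congr rfl fun i _ => ?_
  refine Finset.sum_congr rfl fun a _ => ?_
  exact Finset.sum_congr rfl fun b _ => by ring

/-- Along the constrained gradient flow E' = −G + ⟨G,E⟩_F E (with ‖E(t)‖_F = 1),
the functional F(t) = (1/2) Σᵢ ((λᵢ(t) − δ)₊)² satisfies
F'(t) = −ε (‖G(t)‖_F² − ⟨G(t), E(t)⟩_F²) ≤ 0, i.e. F decays monotonically. -/
theorem functional_decays_along_constrained_gradient_flow
    {n : ℕ} (A : Matrix (Fin n) (Fin n) ℝ) (ε : ℝ) (hε : 0 < ε) (δ : ℝ)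
    (D : Matrix (Fin n) (Fin n) ℝ) (hD : D.IsDiag)
    (E E' G : ℝ → Matrix (Fin n) (Fin n) ℝ)
    (hE : ∀ t i j, HasDerivAt (fun s => E s i j) (E' t i j) t)
    (lam lam' : Fin n → ℝ → ℝ) (x x' : Fin n → ℝ → Fin n → ℝ)
    (hlam : ∀ i t, HasDerivAt (lam i) (lam' i t) t)
    (hx : ∀ i t j, HasDerivAt (fun s => x i s j) (x' i t j) t)
    (heig : ∀ i t, (symPart (D * (A + ε • E t))).mulVec (x i t) = lam i t • x i t)
    (hnorm : ∀ i t, euclNorm (x i t) = 1)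
    (hG : ∀ t, G t = ∑ i, max (lam i t - δ) 0 • Matrix.vecMulVec (D.mulVec (x i t)) (x i t))
    (hEnorm : ∀ t, frobNorm (E t) = 1)
    (hflow : ∀ t, E' t = -G t + frobInner (G t) (E t) • E t) :
    ∀ t, HasDerivAt
        (fun s => (1/2 : ℝ) * ∑ i, max (lam i s - δ) 0 ^ 2)
        (-(ε * (frobNorm (G t) ^ 2 - frobInner (G t) (E t) ^ 2))) t ∧
      -(ε * (frobNorm (G t) ^ 2 - frobInner (G t) (E t) ^ 2)) ≤ 0 := by
  intro t
  have hDsymm : ∀ j l, D j l = D l j := by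
    intro j l
    have := hD.isSymm
    rw [Matrix.IsSymm] at this
    exact congrFun (congrFun this l) j
  -- squared norm of eigenvectors is 1
  have hsq : ∀ i s, ∑ j, x i s j ^ 2 = 1 := by
    intro i s
    exact Real.sqrt_eq_one.mp (hnorm i s)
  -- orthogonality x' ⊥ x
  have horth : ∀ i, ∑ j, x' i t j * x i t j = 0 := by
    intro i
    have h1 : HasDerivAt (fun s => ∑ j, x i s j ^ 2)
        (∑ j, (2:ℕ) * x i t j ^ 1 * x' i t j) t :=
      HasDerivAt.fun_sum fun j _ => (hx i t j).pow 2
    have h2 : HasDerivAt (fun s => ∑ j, x i s j ^ 2) 0 t := by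
      have he : (fun s => ∑ j, x i s j ^ 2) = fun _ => (1:ℝ) := funext fun s => hsq i s
      rw [he]; exact hasDerivAt_const _ _
    have h3 := h1.unique h2
    have h4 : ∑ j, (2:ℕ) * x i t j ^ 1 * x' i t j = 2 * ∑ j, x' i t j * x i t j := by
      rw [Finset.mul_sum]
      exact Finset.sum_congr rfl fun j _ => by push_cast; ring
    rw [h4] at h3
    linarith
  -- entrywise derivative of symPart matrix
  have hSderiv : ∀ j k, HasDerivAt (fun s => symPart (D * (A + ε • E s)) j k)
      ((ε • symPart (D * E' t)) j k) t := by
    intro j k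
    have h1 : ∀ l, HasDerivAt (fun s => D j l * (A l k + ε * E s l k))
        (D j l * (ε * E' t l k)) t :=
      fun l => (((hE t l k).const_mul ε).const_add (A l k)).const_mul (D j l)
    have h2 : ∀ l, HasDerivAt (fun s => D k l * (A l j + ε * E s l j))
        (D k l * (ε * E' t l j)) t :=
      fun l => (((hE t l j).const_mul ε).const_add (A l j)).const_mul (D k l)
    have h3 : HasDerivAt
        (fun s => (1/2) * ((∑ l, D j l * (A l k + ε * E s l k))
            + (∑ l, D k l * (A l j + ε * E s l j))))
        ((1/2) * ((∑ l, D j l * (ε * E' t l k)) + (∑ l, D k l * (ε * E' t l j)))) t :=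
      (((HasDerivAt.fun_sum fun l _ => h1 l).add (HasDerivAt.fun_sum fun l _ => h2 l)).const_mul _)
    rw [symPart_entry2]
    have he : (fun s => symPart (D * (A + ε • E s)) j k)
        = fun s => (1/2) * ((∑ l, D j l * (A l k + ε * E s l k))
            + (∑ l, D k l * (A l j + ε * E s l j))) :=
      funext fun s => symPart_entry D A (E s) ε j k
    rw [he]
    exact h3
  -- eigen relation componentwise
  have heig' : ∀ i s j, ∑ k, symPart (D * (A + ε • E s)) j k * x i s k = lam i s * x i s j := by
    intro i s j
    have := congrFun (heig i s) j
    simpa [Matrix.mulVec, dotProduct] using this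
  -- symmetry of symPart
  have hSsymm : ∀ s j k, symPart (D * (A + ε • E s)) j k = symPart (D * (A + ε • E s)) k j := by
    intro s j k
    rw [symPart_entry, symPart_entry]
    ring
  -- lam as quadratic form
  have hlamq : ∀ i s, lam i s
      = ∑ j, ∑ k, x i s j * symPart (D * (A + ε • E s)) j k * x i s k := by
    intro i s
    calc lam i s = lam i s * ∑ j, x i s j ^ 2 := by rw [hsq i s, mul_one]
      _ = ∑ j, x i s j * (lam i s * x i s j) := by
          rw [Finset.mul_sum]; exact Finset.sum_congr rfl fun j _ => by ring
      _ = ∑ j, x i s j * (∑ k, symPart (D * (A + ε • E s)) j k * x i s k) :=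
          Finset.sum_congr rfl fun j _ => by rw [heig' i s j]
      _ = ∑ j, ∑ k, x i s j * symPart (D * (A + ε • E s)) j k * x i s k :=
          Finset.sum_congr rfl fun j _ => by
            rw [Finset.mul_sum]; exact Finset.sum_congr rfl fun k _ => by ring
  -- derivative of the quadratic form
  have hqderiv : ∀ i, HasDerivAt
      (fun s => ∑ j, ∑ k, x i s j * symPart (D * (A + ε • E s)) j k * x i s k)
      (∑ j, ∑ k, ((x' i t j * symPart (D * (A + ε • E t)) j k
          + x i t j * (ε • symPart (D * E' t)) j k) * x i t k
          + x i t j * symPart (D * (A + ε • E t)) j k * x' i t k)) t :=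
    fun i => HasDerivAt.fun_sum fun j _ => HasDerivAt.fun_sum fun k _ =>
      ((hx i t j).mul (hSderiv j k)).mul (hx i t k)
  -- value of lam'
  have hlam' : ∀ i, lam' i t
      = ε * frobInner (E' t) (Matrix.vecMulVec (D.mulVec (x i t)) (x i t)) := by
    intro i
    have hfe : lam i
        = fun s => ∑ j, ∑ k, x i s j * symPart (D * (A + ε • E s)) j k * x i s k :=
      funext fun s => hlamq i s
    have hld : HasDerivAt (lam i)
        (∑ j, ∑ k, ((x' i t j * symPart (D * (A + ε • E t)) j k
            + x i t j * (ε • symPart (D * E' t)) j k) * x i t k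
            + x i t j * symPart (D * (A + ε • E t)) j k * x' i t k)) t := by
      rw [hfe]; exact hqderiv i
    have huniq := (hlam i t).unique hld
    rw [huniq]
    set W : ℝ := ∑ j, ∑ k, ∑ l, x i t j * (D j l * (ε * E' t l k)) * x i t k with hW
    have hsplitsum : (∑ j, ∑ k, ((x' i t j * symPart (D * (A + ε • E t)) j k
            + x i t j * (ε • symPart (D * E' t)) j k) * x i t k
            + x i t j * symPart (D * (A + ε • E t)) j k * x' i t k))
        = (∑ j, ∑ k, x' i t j * symPart (D * (A + ε • E t)) j k * x i t k)
          + (∑ j, ∑ k, x i t j * (ε • symPart (D * E' t)) j k * x i t k)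
          + (∑ j, ∑ k, x i t j * symPart (D * (A + ε • E t)) j k * x' i t k) := by
      rw [← Finset.sum_add_distrib, ← Finset.sum_add_distrib]
      refine Finset.sum_congr rfl fun j _ => ?_
      rw [← Finset.sum_add_distrib, ← Finset.sum_add_distrib]
      exact Finset.sum_congr rfl fun k _ => by ring
    have hT1 : (∑ j, ∑ k, x' i t j * symPart (D * (A + ε • E t)) j k * x i t k) = 0 := by
      have h5 : ∀ j, ∑ k, x' i t j * symPart (D * (A + ε • E t)) j k * x i t k
          = x' i t j * (lam i t * x i t j) := by
        intro j
        rw [← heig' i t j, Finset.mul_sum]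
        exact Finset.sum_congr rfl fun k _ => by ring
      rw [Finset.sum_congr rfl fun j _ => h5 j]
      have h6 : ∑ j, x' i t j * (lam i t * x i t j)
          = lam i t * ∑ j, x' i t j * x i t j := by
        rw [Finset.mul_sum]; exact Finset.sum_congr rfl fun j _ => by ring
      rw [h6, horth i, mul_zero]
    have hT3 : (∑ j, ∑ k, x i t j * symPart (D * (A + ε • E t)) j k * x' i t k) = 0 := by
      rw [Finset.sum_comm]
      have h5 : ∀ k, ∑ j, x i t j * symPart (D * (A + ε • E t)) j k * x' i t k
          = x' i t k * (lam i t * x i t k) := by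
        intro k
        calc ∑ j, x i t j * symPart (D * (A + ε • E t)) j k * x' i t k
            = ∑ j, x' i t k * (symPart (D * (A + ε • E t)) k j * x i t j) :=
              Finset.sum_congr rfl fun j _ => by rw [hSsymm t j k]; ring
          _ = x' i t k * ∑ j, symPart (D * (A + ε • E t)) k j * x i t j :=
              (Finset.mul_sum _ _ _).symm
          _ = x' i t k * (lam i t * x i t k) := by rw [heig' i t k]
      rw [Finset.sum_congr rfl fun k _ => h5 k]
      have h6 : ∑ k, x' i t k * (lam i t * x i t k)
          = lam i t * ∑ k, x' i t k * x i t k := by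
        rw [Finset.mul_sum]; exact Finset.sum_congr rfl fun k _ => by ring
      rw [h6, horth i, mul_zero]
    have hterm : ∀ j k, x i t j * (ε • symPart (D * E' t)) j k * x i t k
        = (1/2) * (∑ l, x i t j * (D j l * (ε * E' t l k)) * x i t k)
        + (1/2) * (∑ l, x i t j * (D k l * (ε * E' t l j)) * x i t k) := by
      intro j k
      rw [symPart_entry2, ← mul_sum_mul, ← mul_sum_mul]
      ring
    have hW2 : (∑ j, ∑ k, ∑ l, x i t j * (D k l * (ε * E' t l j)) * x i t k) = W := by
      rw [hW, Finset.sum_comm]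
      exact Finset.sum_congr rfl fun j _ => Finset.sum_congr rfl fun k _ =>
        Finset.sum_congr rfl fun l _ => by ring
    have hT2 : (∑ j, ∑ k, x i t j * (ε • symPart (D * E' t)) j k * x i t k) = W := by
      rw [Finset.sum_congr rfl fun j _ => Finset.sum_congr rfl fun k _ => hterm j k]
      simp only [Finset.sum_add_distrib, ← Finset.mul_sum]
      rw [hW2]
      ring
    have hRHS : ε * frobInner (E' t) (Matrix.vecMulVec (D.mulVec (x i t)) (x i t)) = W := by
      rw [frobInner_eq_sum, Finset.mul_sum]
      simp only [Matrix.vecMulVec_apply, Matrix.mulVec, dotProduct]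
      calc ∑ a, ε * ∑ b, E' t a b * ((∑ l, D a l * x i t l) * x i t b)
          = ∑ a, ∑ b, ∑ l, ε * (E' t a b * (D a l * x i t l) * x i t b) := by
            refine Finset.sum_congr rfl fun a _ => ?_
            rw [Finset.mul_sum]
            refine Finset.sum_congr rfl fun b _ => ?_
            rw [show E' t a b * ((∑ l, D a l * x i t l) * x i t b)
                = ∑ l, E' t a b * (D a l * x i t l) * x i t b from by
              rw [← mul_assoc, mul_sum_mul]]
            rw [Finset.mul_sum]
        _ = ∑ a, ∑ b, ∑ l, x i t l * (D l a * (ε * E' t a b)) * x i t b :=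
            Finset.sum_congr rfl fun a _ => Finset.sum_congr rfl fun b _ =>
              Finset.sum_congr rfl fun l _ => by rw [hDsymm a l]; ring
        _ = ∑ l, ∑ a, ∑ b, x i t l * (D l a * (ε * E' t a b)) * x i t b :=
            sum3_rotate _
        _ = ∑ l, ∑ b, ∑ a, x i t l * (D l a * (ε * E' t a b)) * x i t b :=
            Finset.sum_congr rfl fun l _ => Finset.sum_comm
        _ = W := by rw [hW]
    rw [hsplitsum, hT1, hT3, hT2, zero_add, add_zero]
    exact hRHS.symm
  -- derivative of F
  have hFderiv : HasDerivAt (fun s => (1/2:ℝ) * ∑ i, max (lam i s - δ) 0 ^ 2)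
      ((1/2) * ∑ i, 2 * max (lam i t - δ) 0 * lam' i t) t := by
    refine HasDerivAt.const_mul _ (HasDerivAt.fun_sum fun i _ => ?_)
    have h1 : HasDerivAt (fun s => lam i s - δ) (lam' i t) t := (hlam i t).sub_const δ
    have h2 := (maxsq_hasDerivAt (lam i t - δ)).comp t h1
    exact h2
  -- the value of the derivative
  have hvals : (1/2:ℝ) * ∑ i, 2 * max (lam i t - δ) 0 * lam' i t
      = ε * frobInner (E' t) (G t) := by
    calc (1/2:ℝ) * ∑ i, 2 * max (lam i t - δ) 0 * lam' i t
        = ∑ i, max (lam i t - δ) 0 * lam' i t := by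
          rw [Finset.mul_sum]; exact Finset.sum_congr rfl fun i _ => by ring
      _ = ∑ i, ε * (max (lam i t - δ) 0
            * frobInner (E' t) (Matrix.vecMulVec (D.mulVec (x i t)) (x i t))) :=
          Finset.sum_congr rfl fun i _ => by rw [hlam' i]; ring
      _ = ε * ∑ i, max (lam i t - δ) 0
            * frobInner (E' t) (Matrix.vecMulVec (D.mulVec (x i t)) (x i t)) := by
          rw [Finset.mul_sum]
      _ = ε * frobInner (E' t) (G t) := by rw [hG t, frobInner_sum_smul]
  -- substitute the flow
  have hEG : frobInner (E' t) (G t)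
      = -(frobInner (G t) (G t)) + frobInner (G t) (E t) * frobInner (G t) (E t) := by
    rw [hflow t]
    set c := frobInner (G t) (E t) with hc
    rw [frobInner_eq_sum]
    simp only [Matrix.add_apply, Matrix.neg_apply, Matrix.smul_apply, smul_eq_mul]
    have hGG : frobInner (G t) (G t) = ∑ a, ∑ b, G t a b * G t a b := frobInner_eq_sum _ _
    have hGE : c = ∑ a, ∑ b, G t a b * E t a b := by rw [hc, frobInner_eq_sum]
    rw [hGG]
    calc ∑ a, ∑ b, (-(G t a b) + c * E t a b) * G t a b
        = ∑ a, ∑ b, (-(G t a b * G t a b) + c * (G t a b * E t a b)) :=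
          Finset.sum_congr rfl fun a _ => Finset.sum_congr rfl fun b _ => by ring
      _ = -(∑ a, ∑ b, G t a b * G t a b) + c * ∑ a, ∑ b, G t a b * E t a b := by
          simp only [Finset.sum_add_distrib, ← Finset.mul_sum, Finset.sum_neg_distrib]
      _ = -(∑ a, ∑ b, G t a b * G t a b) + c * c := by rw [← hGE]
  have hGG_norm : frobNorm (G t) ^ 2 = frobInner (G t) (G t) := by
    rw [frobNorm, Real.sq_sqrt]
    rw [frobInner_eq_sum]
    exact Finset.sum_nonneg fun a _ => Finset.sum_nonneg fun b _ => mul_self_nonneg _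
  have hEE : frobInner (E t) (E t) = 1 := Real.sqrt_eq_one.mp (hEnorm t)
  have hCS : frobInner (G t) (E t) ^ 2
      ≤ frobInner (G t) (G t) * frobInner (E t) (E t) := by
    rw [frobInner_eq_sum, frobInner_eq_sum, frobInner_eq_sum]
    have h := Finset.sum_mul_sq_le_sq_mul_sq Finset.univ
      (fun p : Fin n × Fin n => G t p.1 p.2) (fun p : Fin n × Fin n => E t p.1 p.2)
    simpa [Fintype.sum_prod_type, sq] using h
  have h7 : frobInner (G t) (E t) ^ 2 ≤ frobNorm (G t) ^ 2 := by
    rw [hGG_norm]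
    calc frobInner (G t) (E t) ^ 2
        ≤ frobInner (G t) (G t) * frobInner (E t) (E t) := hCS
      _ = frobInner (G t) (G t) := by rw [hEE, mul_one]
  constructor
  · have hfin : (1/2:ℝ) * ∑ i, 2 * max (lam i t - δ) 0 * lam' i t
        = -(ε * (frobNorm (G t) ^ 2 - frobInner (G t) (E t) ^ 2)) := by
      rw [hvals, hEG, hGG_norm]; ring
    exact hfin ▸ hFderiv
  · have h8 := mul_nonneg hε.le (sub_nonneg.mpr h7)
    linarith
end
end

section
/- Let 0 < m ≤ 1, let σ : ℝ → ℝ be differentiable with m ≤ σ'(s) ≤ 1 for all s ∈ ℝ, let A be a real n×n matrix, b ∈ ℝⁿ, and set δ⋆ = sup_{D ∈ Ω_m} μ₂(D A). Let A₁ be a real n×p matrix, b₁ ∈ ℝⁿ, A₂ a real q×n matrix, b₂ ∈ ℝ^q. Let x, y ∈ ℝ^p and let u, v : [0,1] → ℝⁿ be differentiable solutions of u̇(t) = σ(A u(t) + b) with u(0) = A₁ x + b₁ and v(0) = A₁ y + b₁. Then ‖softmax(A₂ u(1) + b₂) − softmax(A₂ v(1) + b₂)‖ ≤ e^{δ⋆}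 ‖A₂‖₂ ‖A₁‖₂ ‖x − y‖, where ‖·‖₂ denotes the spectral (operator 2-)norm; i.e. the Lipschitz constant of the classifier φ = softmax ∘ (A₂ · + b₂) ∘ φ₁ ∘ (A₁ · + b₁) is bounded by e^{δ⋆} ‖A₂‖₂ ‖A₁‖₂. -/
open Matrix
open scoped RealInnerProductSpace

noncomputable section

theorem symPart_isHermitian {n : ℕ} (M : Matrix (Fin n) (Fin n) ℝ) :
    (symPart M).IsHermitian := by
  unfold symPart Matrix.IsHermitian
  ext i j
  simp [Matrix.conjTranspose_apply, Matrix.transpose_apply, Matrix.add_apply]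
  ring

/-- The logarithmic 2-norm μ₂(M): the largest eigenvalue of the symmetric part of M. -/
def mu2 {n : ℕ} (M : Matrix (Fin n) (Fin n) ℝ) : ℝ :=
  ⨆ i, (symPart_isHermitian M).eigenvalues i

/-- `OmegaSet n m` is the set Ω_m of real n×n diagonal matrices whose diagonal
entries all lie in the interval [m, 1]. -/
def OmegaSet (n : ℕ) (m : ℝ) : Set (Matrix (Fin n) (Fin n) ℝ) :=
  {D | D.IsDiag ∧ ∀ i, m ≤ D i i ∧ D i i ≤ 1}

/-- Identification of `Fin n → ℝ` with the Euclidean space ℝⁿ. -/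
def toE {n : ℕ} (v : Fin n → ℝ) : EuclideanSpace ℝ (Fin n) :=
  (WithLp.equiv 2 _).symm v

/-- Matrix-vector multiplication on Euclidean space. -/
def mulVecE {p q : ℕ} (A : Matrix (Fin p) (Fin q) ℝ) (x : EuclideanSpace ℝ (Fin q)) :
    EuclideanSpace ℝ (Fin p) := toE (A.mulVec (WithLp.equiv 2 _ x))

/-- Entrywise application of a scalar function σ to a vector of Euclidean space. -/
def mapE {n : ℕ} (σ : ℝ → ℝ) (x : EuclideanSpace ℝ (Fin n)) : EuclideanSpace ℝ (Fin n) :=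
  toE (fun i => σ (WithLp.equiv 2 _ x i))

/-- softmax(x)ᵢ = e^{xᵢ} / Σⱼ e^{xⱼ} on Euclidean space. -/
def softmaxE {n : ℕ} (x : EuclideanSpace ℝ (Fin n)) : EuclideanSpace ℝ (Fin n) :=
  toE (fun i => Real.exp (WithLp.equiv 2 _ x i) / ∑ j, Real.exp (WithLp.equiv 2 _ x j))

/-- Spectral (operator 2-)norm of a real matrix. -/
def specNorm {p q : ℕ} (A : Matrix (Fin p) (Fin q) ℝ) : ℝ :=
  ‖(Matrix.toEuclideanLin A).toContinuousLinearMap‖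

/-! ### Auxiliary lemmas -/

lemma mulVecE_eq_clm {p q : ℕ} (A : Matrix (Fin p) (Fin q) ℝ) (x : EuclideanSpace ℝ (Fin q)) :
    mulVecE A x = (Matrix.toEuclideanLin A).toContinuousLinearMap x := rfl

lemma norm_mulVecE_le {p q : ℕ} (A : Matrix (Fin p) (Fin q) ℝ) (x : EuclideanSpace ℝ (Fin q)) :
    ‖mulVecE A x‖ ≤ specNorm A * ‖x‖ := by
  rw [mulVecE_eq_clm]; exact (Matrix.toEuclideanLin A).toContinuousLinearMap.le_opNorm x

lemma mulVecE_sub {p q : ℕ} (A : Matrix (Fin p) (Fin q) ℝ) (x y : EuclideanSpace ℝ (Fin q)) :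
    mulVecE A (x - y) = mulVecE A x - mulVecE A y := by
  rw [mulVecE_eq_clm, mulVecE_eq_clm, mulVecE_eq_clm, map_sub]

lemma normE_sq {n : ℕ} (w : EuclideanSpace ℝ (Fin n)) : ‖w‖^2 = ∑ i, (w i)^2 := by
  rw [EuclideanSpace.norm_eq, Real.sq_sqrt (by positivity)]
  simp [Real.norm_eq_abs, sq_abs]

lemma innerE {n : ℕ} (x y : EuclideanSpace ℝ (Fin n)) : ⟪x, y⟫ = ∑ i, x i * y i := by
  simp [PiLp.inner_apply, RCLike.inner_apply, starRingEnd_apply]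
  exact Finset.sum_congr rfl fun _ _ => mul_comm _ _

lemma sq_le_imp {a b : ℝ} (ha : 0 ≤ a) (hb : 0 ≤ b) (h : a^2 ≤ b^2) : a ≤ b := by nlinarith

lemma specNorm_nonneg {p q : ℕ} (A : Matrix (Fin p) (Fin q) ℝ) : 0 ≤ specNorm A := norm_nonneg _

lemma specNorm_mul_le {p q r : ℕ} (M : Matrix (Fin p) (Fin q) ℝ) (N : Matrix (Fin q) (Fin r) ℝ) :
    specNorm (M * N) ≤ specNorm M * specNorm N := by
  have h : (Matrix.toEuclideanLin (M * N)).toContinuousLinearMap =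
      (Matrix.toEuclideanLin M).toContinuousLinearMap.comp
        (Matrix.toEuclideanLin N).toContinuousLinearMap := by
    refine ContinuousLinearMap.ext fun x => ?_
    show Matrix.toEuclideanLin (M * N) x = Matrix.toEuclideanLin M (Matrix.toEuclideanLin N x)
    apply PiLp.ext; intro i
    have := congrFun (Matrix.mulVec_mulVec (WithLp.equiv 2 _ x) M N).symm i
    simpa [Matrix.toEuclideanLin_apply] using this
  rw [specNorm, h]
  exact ContinuousLinearMap.opNorm_comp_le _ _

lemma specNorm_symPart_le {n : ℕ} (M : Matrix (Fin n) (Fin n) ℝ) :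
    specNorm (symPart M) ≤ (specNorm M + specNorm Mᵀ)/2 := by
  have h : (Matrix.toEuclideanLin (symPart M)).toContinuousLinearMap =
      (1/2 : ℝ) • ((Matrix.toEuclideanLin M).toContinuousLinearMap +
        (Matrix.toEuclideanLin Mᵀ).toContinuousLinearMap) := by
    refine ContinuousLinearMap.ext fun x => ?_
    show Matrix.toEuclideanLin (symPart M) x
      = (1/2 : ℝ) • (Matrix.toEuclideanLin M x + Matrix.toEuclideanLin Mᵀ x)
    rw [symPart, _root_.map_smul, map_add]
    rfl
  rw [specNorm, h]
  have h2 := norm_smul ((1:ℝ)/2) ((Matrix.toEuclideanLin M).toContinuousLinearMap +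
    (Matrix.toEuclideanLin Mᵀ).toContinuousLinearMap)
  rw [h2]
  have := norm_add_le (Matrix.toEuclideanLin M).toContinuousLinearMap
    (Matrix.toEuclideanLin Mᵀ).toContinuousLinearMap
  rw [Real.norm_eq_abs, show |(1/2 : ℝ)| = 1/2 by norm_num]
  unfold specNorm
  linarith

lemma specNorm_diagonal_le_one {n : ℕ} {d : Fin n → ℝ} (hd : ∀ i, |d i| ≤ 1) :
    specNorm (Matrix.diagonal d) ≤ 1 := by
  apply ContinuousLinearMap.opNorm_le_bound _ zero_le_one
  intro x
  rw [one_mul]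
  apply sq_le_imp (norm_nonneg _) (norm_nonneg _)
  have hmv : ∀ i, ((Matrix.toEuclideanLin (Matrix.diagonal d)).toContinuousLinearMap x) i
      = d i * x i := by
    intro i
    show (Matrix.diagonal d *ᵥ (WithLp.equiv 2 _ x)) i = d i * x i
    rw [Matrix.mulVec_diagonal]
    rfl
  rw [normE_sq, normE_sq]
  refine Finset.sum_le_sum fun i _ => ?_
  rw [hmv i, mul_pow]
  have h1 : (d i)^2 ≤ 1 := by
    have := hd i
    nlinarith [abs_nonneg (d i), sq_abs (d i)]
  nlinarith [sq_nonneg (x i)]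

lemma toEuclideanLin_eigenvector {n : ℕ} {S : Matrix (Fin n) (Fin n) ℝ} (hS : S.IsHermitian)
    (i : Fin n) :
    Matrix.toEuclideanLin S (hS.eigenvectorBasis i) = hS.eigenvalues i • hS.eigenvectorBasis i := by
  have h := hS.mulVec_eigenvectorBasis i
  apply PiLp.ext
  intro j
  have := congrFun h j
  simpa [Matrix.toEuclideanLin_apply] using this

lemma rayleigh_le {n : ℕ} {S : Matrix (Fin n) (Fin n) ℝ} (hS : S.IsHermitian)
    (w : EuclideanSpace ℝ (Fin n)) :
    ⟪w, mulVecE S w⟫ ≤ (⨆ i, hS.eigenvalues i) * ‖w‖^2 := by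
  rcases Nat.eq_zero_or_pos n with hn | hn
  · subst hn
    simp [innerE, Real.iSup_of_isEmpty]
  · haveI : Nonempty (Fin n) := ⟨⟨0, hn⟩⟩
    set B := hS.eigenvectorBasis with hB
    have hmve : mulVecE S w = Matrix.toEuclideanLin S w := rfl
    have hsym : (Matrix.toEuclideanLin S).IsSymmetric :=
      Matrix.isHermitian_iff_isSymmetric.mp hS
    have hrepr : ∀ i, B.repr (Matrix.toEuclideanLin S w) i
        = hS.eigenvalues i * B.repr w i := by
      intro i
      rw [B.repr_apply_apply, ← hsym (B i) w, toEuclideanLin_eigenvector hS i,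
        real_inner_smul_left, B.repr_apply_apply]
    have key : ⟪w, mulVecE S w⟫ = ∑ i, hS.eigenvalues i * (B.repr w i)^2 := by
      rw [hmve, ← B.repr.inner_map_map w (Matrix.toEuclideanLin S w), innerE]
      refine Finset.sum_congr rfl fun i _ => ?_
      rw [hrepr i]; ring
    rw [key]
    have hbdd : BddAbove (Set.range hS.eigenvalues) := (Set.finite_range _).bddAbove
    calc ∑ i, hS.eigenvalues i * (B.repr w i)^2
        ≤ ∑ i, (⨆ j, hS.eigenvalues j) * (B.repr w i)^2 := by
          refine Finset.sum_le_sum fun i _ => ?_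
          exact mul_le_mul_of_nonneg_right (le_ciSup hbdd i) (sq_nonneg _)
      _ = (⨆ j, hS.eigenvalues j) * ∑ i, (B.repr w i)^2 := by rw [Finset.mul_sum]
      _ = (⨆ j, hS.eigenvalues j) * ‖w‖^2 := by
          congr 1
          have : ‖B.repr w‖ = ‖w‖ := B.repr.norm_map w
          rw [← this, EuclideanSpace.norm_eq, Real.sq_sqrt (by positivity)]
          simp [Real.norm_eq_abs, sq_abs]

lemma eigenvalue_le_specNorm {n : ℕ} {S : Matrix (Fin n) (Fin n) ℝ} (hS : S.IsHermitian)
    (i : Fin n) : hS.eigenvalues i ≤ specNorm S := by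
  set b := hS.eigenvectorBasis i with hb
  have hnb : ‖b‖ = 1 := hS.eigenvectorBasis.orthonormal.1 i
  have heig : hS.eigenvalues i = ⟪b, Matrix.toEuclideanLin S b⟫ := by
    rw [toEuclideanLin_eigenvector hS i, real_inner_smul_right, real_inner_self_eq_norm_sq, hnb]
    ring
  have h1 : ⟪b, Matrix.toEuclideanLin S b⟫ ≤ ‖b‖ * ‖Matrix.toEuclideanLin S b‖ :=
    real_inner_le_norm _ _
  have h2 : ‖Matrix.toEuclideanLin S b‖ ≤ specNorm S * ‖b‖ :=
    (Matrix.toEuclideanLin S).toContinuousLinearMap.le_opNorm b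
  rw [heig]
  calc ⟪b, Matrix.toEuclideanLin S b⟫ ≤ ‖b‖ * ‖Matrix.toEuclideanLin S b‖ := h1
    _ ≤ 1 * (specNorm S * 1) := by rw [hnb, one_mul]; simpa [hnb] using h2
    _ = specNorm S := by ring

lemma mu2_le_specNorm_symPart {n : ℕ} (M : Matrix (Fin n) (Fin n) ℝ) :
    mu2 M ≤ specNorm (symPart M) := by
  rcases Nat.eq_zero_or_pos n with hn | hn
  · subst hn
    rw [mu2, Real.iSup_of_isEmpty]
    exact specNorm_nonneg _
  · haveI : Nonempty (Fin n) := ⟨⟨0, hn⟩⟩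
    exact ciSup_le fun i => eigenvalue_le_specNorm (symPart_isHermitian M) i

lemma inner_symPart {n : ℕ} (M : Matrix (Fin n) (Fin n) ℝ) (w : EuclideanSpace ℝ (Fin n)) :
    ⟪w, mulVecE M w⟫ = ⟪w, mulVecE (symPart M) w⟫ := by
  rw [innerE, innerE]
  have hT : ∀ i, (mulVecE (symPart M) w) i
      = (1/2 : ℝ) * ((M *ᵥ ⇑w) i + (Mᵀ *ᵥ ⇑w) i) := by
    intro i
    show ((symPart M) *ᵥ (WithLp.equiv 2 _ w)) i = _
    rw [symPart, Matrix.smul_mulVec, Matrix.add_mulVec]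
    rfl
  have hkey : ∑ i, w i * ((Mᵀ *ᵥ ⇑w) i) = ∑ i, w i * ((M *ᵥ ⇑w) i) := by
    have h1 : (⇑w) ⬝ᵥ (Mᵀ *ᵥ ⇑w) = (⇑w) ⬝ᵥ (M *ᵥ ⇑w) := by
      rw [Matrix.dotProduct_mulVec, Matrix.vecMul_transpose, dotProduct_comm]
    simpa [dotProduct] using h1
  have : ∀ i, (mulVecE M w) i = (M *ᵥ ⇑w) i := fun i => rfl
  simp only [this, hT]
  calc ∑ i, w i * (M *ᵥ ⇑w) i
      = (∑ i, (w i * ((M *ᵥ ⇑w) i) + w i * ((Mᵀ *ᵥ ⇑w) i))) * (1/2) := by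
        rw [Finset.sum_add_distrib, hkey]; ring
    _ = ∑ i, w i * (1/2 * ((M *ᵥ ⇑w) i + (Mᵀ *ᵥ ⇑w) i)) := by
        rw [Finset.sum_mul]; exact Finset.sum_congr rfl fun i _ => by ring

lemma inner_le_mu2 {n : ℕ} (M : Matrix (Fin n) (Fin n) ℝ) (w : EuclideanSpace ℝ (Fin n)) :
    ⟪w, mulVecE M w⟫ ≤ mu2 M * ‖w‖^2 := by
  rw [inner_symPart]
  exact rayleigh_le (symPart_isHermitian M) w

lemma sigma_slope {m : ℝ} (hm1 : m ≤ 1) (σ : ℝ → ℝ) (hσ : Differentiable ℝ σ)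
    (hσ' : ∀ s : ℝ, m ≤ deriv σ s ∧ deriv σ s ≤ 1) (a c : ℝ) :
    ∃ d : ℝ, m ≤ d ∧ d ≤ 1 ∧ σ a - σ c = d * (a - c) := by
  rcases lt_trichotomy a c with h | h | h
  · obtain ⟨s, _, hs⟩ := exists_hasDerivAt_eq_slope σ (deriv σ) h
      (hσ.continuous.continuousOn) (fun x _ => (hσ x).hasDerivAt)
    refine ⟨deriv σ s, (hσ' s).1, (hσ' s).2, ?_⟩
    have hne : c - a ≠ 0 := sub_ne_zero.mpr h.ne'
    field_simp at hs
    linarith [hs]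
  · exact ⟨m, le_refl m, hm1, by rw [h]; ring⟩
  · obtain ⟨s, _, hs⟩ := exists_hasDerivAt_eq_slope σ (deriv σ) h
      (hσ.continuous.continuousOn) (fun x _ => (hσ x).hasDerivAt)
    refine ⟨deriv σ s, (hσ' s).1, (hσ' s).2, ?_⟩
    have hne : a - c ≠ 0 := sub_ne_zero.mpr h.ne'
    field_simp at hs
    linarith [hs]

namespace SoftmaxAux

variable {k : ℕ}

/-- sum of exponentials -/
def S (y : Fin k → ℝ) : ℝ := ∑ j, Real.exp (y j)

lemma S_pos (y : Fin k → ℝ) (hk : 0 < k) : 0 < S y := by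
  apply Finset.sum_pos (fun j _ => Real.exp_pos (y j))
  exact ⟨⟨0, hk⟩, Finset.mem_univ _⟩

/-- softmax on plain functions -/
def g (y : Fin k → ℝ) : Fin k → ℝ := fun i => Real.exp (y i) / S y

/-- candidate derivative of `fun y => g y i` -/
def G (y : Fin k → ℝ) (i : Fin k) : (Fin k → ℝ) →L[ℝ] ℝ :=
  g y i • ContinuousLinearMap.proj i
    - g y i • (∑ j, g y j • (ContinuousLinearMap.proj j : (Fin k → ℝ) →L[ℝ] ℝ))

lemma hasFDerivAt_g (hk : 0 < k) (y : Fin k → ℝ) (i : Fin k) :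
    HasFDerivAt (fun z => g z i) (G y i) y := by
  have hS0 : S y ≠ 0 := (S_pos y hk).ne'
  have hN : HasFDerivAt (fun z : Fin k → ℝ => Real.exp (z i))
      (Real.exp (y i) • (ContinuousLinearMap.proj i : (Fin k → ℝ) →L[ℝ] ℝ)) y :=
    by have := (Real.hasDerivAt_exp (y i)).comp_hasFDerivAt y (hasFDerivAt_apply (𝕜 := ℝ) i y); exact this
  have hSd : HasFDerivAt (fun z : Fin k → ℝ => S z)
      (∑ j, Real.exp (y j) • (ContinuousLinearMap.proj j : (Fin k → ℝ) →L[ℝ] ℝ)) y := by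
    apply HasFDerivAt.fun_sum
    intro j _
    exact (Real.hasDerivAt_exp (y j)).comp_hasFDerivAt y (hasFDerivAt_apply (𝕜 := ℝ) j y)
  have hinv : HasFDerivAt (fun z : Fin k → ℝ => (S z)⁻¹)
      ((-((S y)^2)⁻¹) • (∑ j, Real.exp (y j) • (ContinuousLinearMap.proj j :
        (Fin k → ℝ) →L[ℝ] ℝ))) y :=
    (hasDerivAt_inv hS0).comp_hasFDerivAt y hSd
  have hmul := hN.fun_mul hinv
  have heq : (fun z => g z i) = fun z : Fin k → ℝ => Real.exp (z i) * (S z)⁻¹ := by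
    funext z; rw [g, div_eq_mul_inv]
  rw [heq]
  refine hmul.congr_fderiv (Eq.symm ?_)
  ext z
  simp only [G, g, ContinuousLinearMap.coe_sub', Pi.sub_apply, ContinuousLinearMap.coe_smul',
    Pi.smul_apply, ContinuousLinearMap.proj_apply, ContinuousLinearMap.coe_sum',
    Finset.sum_apply, ContinuousLinearMap.add_apply, smul_eq_mul, Finset.mul_sum]
  field_simp
  ring_nf
  rw [sub_eq_add_neg, Finset.mul_sum, Finset.mul_sum, ← Finset.sum_neg_distrib]
  congr 1
  exact Finset.sum_congr rfl fun j _ => by field_simp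

end SoftmaxAux

namespace SoftmaxAux

variable {k : ℕ}

def L (y : Fin k → ℝ) : (Fin k → ℝ) →L[ℝ] (Fin k → ℝ) :=
  ContinuousLinearMap.pi (fun i => G y i)

lemma hasFDerivAt_gpi (hk : 0 < k) (y : Fin k → ℝ) : HasFDerivAt g (L y) y :=
  hasFDerivAt_pi.2 (fun i => hasFDerivAt_g hk y i)

lemma L_apply (y z : Fin k → ℝ) (i : Fin k) :
    L y z i = g y i * z i - g y i * ∑ j, g y j * z j := by
  simp [L, G, ContinuousLinearMap.pi_apply, ContinuousLinearMap.sum_apply, Finset.mul_sum]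

lemma g_nonneg (y : Fin k → ℝ) (hk : 0 < k) (i : Fin k) : 0 ≤ g y i :=
  div_nonneg (Real.exp_pos _).le (S_pos y hk).le

lemma g_sum_one (y : Fin k → ℝ) (hk : 0 < k) : ∑ i, g y i = 1 := by
  unfold g
  rw [← Finset.sum_div]
  exact div_self (S_pos y hk).ne'

lemma g_le_one (y : Fin k → ℝ) (hk : 0 < k) (i : Fin k) : g y i ≤ 1 := by
  rw [← g_sum_one y hk]
  exact Finset.single_le_sum (fun j _ => g_nonneg y hk j) (Finset.mem_univ i)

lemma sum_L_sq_le (hk : 0 < k) (y z : Fin k → ℝ) :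
    ∑ i, (L y z i)^2 ≤ ∑ i, (z i)^2 := by
  set s : Fin k → ℝ := g y with hs
  set c : ℝ := ∑ j, s j * z j with hc
  have h0 : ∀ i, 0 ≤ s i := g_nonneg y hk
  have h1 : ∀ i, s i ≤ 1 := g_le_one y hk
  have hsum : ∑ i, s i = 1 := g_sum_one y hk
  have step1 : ∀ i, (L y z i)^2 ≤ s i * (z i - c)^2 := by
    intro i
    rw [L_apply]
    have : g y i * z i - g y i * ∑ j, g y j * z j = s i * (z i - c) := by
      rw [hs, hc]; ring
    rw [this]
    have ha := h0 i; have hb := h1 i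
    have hsq : s i ^ 2 ≤ s i := by nlinarith
    nlinarith [mul_nonneg (sub_nonneg.mpr hsq) (sq_nonneg (z i - c))]
  have step2 : ∑ i, s i * (z i - c)^2 = (∑ i, s i * (z i)^2) - c^2 := by
    have expand : ∀ i, s i * (z i - c)^2 = s i * (z i)^2 - 2*c*(s i * z i) + c^2 * s i := by
      intro i; ring
    rw [Finset.sum_congr rfl fun i _ => expand i, Finset.sum_add_distrib,
      Finset.sum_sub_distrib, ← Finset.mul_sum, ← Finset.mul_sum, hsum, ← hc]
    ring
  have step3 : ∑ i, s i * (z i)^2 ≤ ∑ i, (z i)^2 := by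
    refine Finset.sum_le_sum fun i _ => ?_
    nlinarith [sq_nonneg (z i), h0 i, h1 i]
  calc ∑ i, (L y z i)^2 ≤ ∑ i, s i * (z i - c)^2 := Finset.sum_le_sum fun i _ => step1 i
    _ = (∑ i, s i * (z i)^2) - c^2 := step2
    _ ≤ ∑ i, s i * (z i)^2 := by nlinarith [sq_nonneg c]
    _ ≤ ∑ i, (z i)^2 := step3

end SoftmaxAux

lemma softmaxE_lipschitz {k : ℕ} (a b : EuclideanSpace ℝ (Fin k)) :
    ‖softmaxE a - softmaxE b‖ ≤ ‖a - b‖ := by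
  rcases Nat.eq_zero_or_pos k with hk | hk
  · subst hk
    have : softmaxE a = softmaxE b := Subsingleton.elim _ _
    rw [this, sub_self, norm_zero]
    exact norm_nonneg _
  · set φ : EuclideanSpace ℝ (Fin k) ≃L[ℝ] (Fin k → ℝ) :=
      PiLp.continuousLinearEquiv 2 ℝ (fun _ : Fin k => ℝ) with hφ
    set F' : EuclideanSpace ℝ (Fin k) → (EuclideanSpace ℝ (Fin k) →L[ℝ] EuclideanSpace ℝ (Fin k)) :=
      fun x => ((φ.symm : (Fin k → ℝ) →L[ℝ] EuclideanSpace ℝ (Fin k)).comp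
        ((SoftmaxAux.L (φ x)).comp (φ : EuclideanSpace ℝ (Fin k) →L[ℝ] (Fin k → ℝ)))) with hF'
    have hderiv : ∀ x, HasFDerivAt softmaxE (F' x) x := by
      intro x
      have h1 : HasFDerivAt SoftmaxAux.g (SoftmaxAux.L (φ x)) (φ x) :=
        SoftmaxAux.hasFDerivAt_gpi hk (φ x)
      have h2 : HasFDerivAt (⇑φ) (φ : EuclideanSpace ℝ (Fin k) →L[ℝ] (Fin k → ℝ)) x :=
        φ.hasFDerivAt
      have h3 := (φ.symm.hasFDerivAt).comp x (h1.comp x h2)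
      exact h3
    have hbound : ∀ x, ‖F' x‖ ≤ 1 := by
      intro x
      apply ContinuousLinearMap.opNorm_le_bound _ zero_le_one
      intro z
      rw [one_mul]
      apply sq_le_imp (norm_nonneg _) (norm_nonneg _)
      rw [normE_sq, normE_sq]
      have happ : ∀ i, (F' x z) i = SoftmaxAux.L (φ x) (φ z) i := fun i => rfl
      simp only [happ]
      exact SoftmaxAux.sum_L_sq_le hk (φ x) (φ z)
    have := convex_univ.norm_image_sub_le_of_norm_hasFDerivWithin_le
      (f := softmaxE) (f' := F')
      (fun x _ => (hderiv x).hasFDerivWithinAt) (fun x _ => hbound x)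
      (Set.mem_univ b) (Set.mem_univ a)
    simpa using this

/-! ### Omega set and the supremum δ⋆ -/

lemma one_mem_OmegaSet {n : ℕ} {m : ℝ} (hm1 : m ≤ 1) : (1 : Matrix (Fin n) (Fin n) ℝ) ∈ OmegaSet n m := by
  refine ⟨Matrix.isDiag_one, fun i => ?_⟩
  simp [Matrix.one_apply_eq]
  exact hm1

lemma OmegaSet_eq_diagonal {n : ℕ} {m : ℝ} {D : Matrix (Fin n) (Fin n) ℝ}
    (hD : D ∈ OmegaSet n m) : D = Matrix.diagonal (fun i => D i i) := by
  ext i j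
  by_cases h : i = j
  · subst h; simp
  · rw [Matrix.diagonal_apply_ne _ h]
    exact hD.1 h

lemma mu2_mul_le_of_mem {n : ℕ} {m : ℝ} (hm0 : 0 < m) (A : Matrix (Fin n) (Fin n) ℝ)
    {D : Matrix (Fin n) (Fin n) ℝ} (hD : D ∈ OmegaSet n m) :
    mu2 (D * A) ≤ (specNorm A + specNorm Aᵀ) / 2 := by
  have hdiag : D = Matrix.diagonal (fun i => D i i) := OmegaSet_eq_diagonal hD
  have habs : ∀ i, |D i i| ≤ 1 := by
    intro i
    rw [abs_le]
    exact ⟨by linarith [(hD.2 i).1], (hD.2 i).2⟩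
  have hDnorm : specNorm D ≤ 1 := by
    rw [hdiag]; exact specNorm_diagonal_le_one habs
  have hDtnorm : specNorm Dᵀ ≤ 1 := by
    rw [hdiag, Matrix.diagonal_transpose]; exact specNorm_diagonal_le_one habs
  have h1 : specNorm (D * A) ≤ specNorm A := by
    calc specNorm (D * A) ≤ specNorm D * specNorm A := specNorm_mul_le D A
      _ ≤ 1 * specNorm A := mul_le_mul_of_nonneg_right hDnorm (specNorm_nonneg A)
      _ = specNorm A := one_mul _
  have h2 : specNorm ((D * A)ᵀ) ≤ specNorm Aᵀ := by
    rw [Matrix.transpose_mul]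
    calc specNorm (Aᵀ * Dᵀ) ≤ specNorm Aᵀ * specNorm Dᵀ := specNorm_mul_le Aᵀ Dᵀ
      _ ≤ specNorm Aᵀ * 1 := mul_le_mul_of_nonneg_left hDtnorm (specNorm_nonneg Aᵀ)
      _ = specNorm Aᵀ := mul_one _
  calc mu2 (D * A) ≤ specNorm (symPart (D * A)) := mu2_le_specNorm_symPart _
    _ ≤ (specNorm (D * A) + specNorm ((D * A)ᵀ)) / 2 := specNorm_symPart_le _
    _ ≤ (specNorm A + specNorm Aᵀ) / 2 := by linarith

lemma bddAbove_mu2_image {n : ℕ} {m : ℝ} (hm0 : 0 < m) (A : Matrix (Fin n) (Fin n) ℝ) :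
    BddAbove ((fun D => mu2 (D * A)) '' OmegaSet n m) := by
  refine ⟨(specNorm A + specNorm Aᵀ) / 2, fun x hx => ?_⟩
  obtain ⟨D, hD, rfl⟩ := hx
  exact mu2_mul_le_of_mem hm0 A hD

lemma mu2_le_deltaStar {n : ℕ} {m : ℝ} (hm0 : 0 < m) (A : Matrix (Fin n) (Fin n) ℝ)
    {D : Matrix (Fin n) (Fin n) ℝ} (hD : D ∈ OmegaSet n m) :
    mu2 (D * A) ≤ sSup ((fun D => mu2 (D * A)) '' OmegaSet n m) :=
  le_csSup (bddAbove_mu2_image hm0 A) ⟨D, hD, rfl⟩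

/-! ### Flow contraction via Grönwall -/

lemma flow_contraction {n : ℕ} (m : ℝ) (hm0 : 0 < m) (hm1 : m ≤ 1)
    (σ : ℝ → ℝ) (hσ : Differentiable ℝ σ)
    (hσ' : ∀ s : ℝ, m ≤ deriv σ s ∧ deriv σ s ≤ 1)
    (A : Matrix (Fin n) (Fin n) ℝ) (b : EuclideanSpace ℝ (Fin n))
    (u v : ℝ → EuclideanSpace ℝ (Fin n))
    (hu : ∀ t ∈ Set.Icc (0:ℝ) 1, HasDerivAt u (mapE σ (mulVecE A (u t) + b)) t)
    (hv : ∀ t ∈ Set.Icc (0:ℝ) 1, HasDerivAt v (mapE σ (mulVecE A (v t) + b)) t) :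
    ‖u 1 - v 1‖ ≤ Real.exp (sSup ((fun D => mu2 (D * A)) '' OmegaSet n m)) * ‖u 0 - v 0‖ := by
  set δ := sSup ((fun D => mu2 (D * A)) '' OmegaSet n m) with hδ
  set w : ℝ → EuclideanSpace ℝ (Fin n) := fun t => u t - v t with hw
  set wd : ℝ → EuclideanSpace ℝ (Fin n) :=
    fun t => mapE σ (mulVecE A (u t) + b) - mapE σ (mulVecE A (v t) + b) with hwd
  have hwderiv : ∀ t ∈ Set.Icc (0:ℝ) 1, HasDerivAt w (wd t) t :=
    fun t ht => (hu t ht).sub (hv t ht)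
  set f : ℝ → ℝ := fun t => ⟪w t, w t⟫ with hf
  have hfderiv : ∀ t ∈ Set.Icc (0:ℝ) 1, HasDerivAt f (2 * ⟪w t, wd t⟫) t := by
    intro t ht
    have := (hwderiv t ht).inner ℝ (hwderiv t ht)
    have h2 : ⟪w t, wd t⟫ + ⟪wd t, w t⟫ = 2 * ⟪w t, wd t⟫ := by
      rw [real_inner_comm (wd t) (w t)]; ring
    rw [h2] at this
    exact this
  have hcont : ContinuousOn f (Set.Icc (0:ℝ) 1) :=
    fun t ht => ((hfderiv t ht).continuousAt).continuousWithinAt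
  -- key pointwise bound
  have hbound : ∀ t ∈ Set.Ico (0:ℝ) 1, 2 * ⟪w t, wd t⟫ ≤ (2 * δ) * f t + 0 := by
    intro t ht
    have htIcc : t ∈ Set.Icc (0:ℝ) 1 := Set.Ico_subset_Icc_self ht
    -- construct the diagonal matrix D
    have hchoice : ∀ i : Fin n, ∃ d : ℝ, m ≤ d ∧ d ≤ 1 ∧
        σ ((mulVecE A (u t) + b) i) - σ ((mulVecE A (v t) + b) i)
          = d * ((mulVecE A (u t) + b) i - (mulVecE A (v t) + b) i) :=
      fun i => sigma_slope hm1 σ hσ hσ' _ _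
    choose d hd1 hd2 hd3 using hchoice
    set D := Matrix.diagonal d with hD
    have hDmem : D ∈ OmegaSet n m := by
      refine ⟨Matrix.isDiag_diagonal d, fun i => ?_⟩
      rw [hD, Matrix.diagonal_apply_eq]
      exact ⟨hd1 i, hd2 i⟩
    have hwdeq : wd t = mulVecE (D * A) (w t) := by
      apply PiLp.ext
      intro i
      have hlhs : wd t i = σ ((mulVecE A (u t) + b) i) - σ ((mulVecE A (v t) + b) i) := rfl
      have hrhs : (mulVecE (D * A) (w t)) i = d i * ((A *ᵥ ⇑(w t)) i) := by
        show ((D * A) *ᵥ (WithLp.equiv 2 _ (w t))) i = _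
        rw [← Matrix.mulVec_mulVec, Matrix.mulVec_diagonal]
        rfl
      rw [hlhs, hrhs, hd3 i]
      congr 1
      have : (A *ᵥ ⇑(w t)) i = (A *ᵥ ⇑(u t)) i - (A *ᵥ ⇑(v t)) i := by
        have hsub : ⇑(w t) = ⇑(u t) - ⇑(v t) := rfl
        rw [hsub, Matrix.mulVec_sub]
        rfl
      have hab : (mulVecE A (u t) + b) i - (mulVecE A (v t) + b) i
          = (A *ᵥ ⇑(u t)) i - (A *ᵥ ⇑(v t)) i := by
        show ((A *ᵥ ⇑(u t)) i + b i) - ((A *ᵥ ⇑(v t)) i + b i) = _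
        ring
      rw [hab, this]
    have eft : f t = ‖w t‖^2 := real_inner_self_eq_norm_sq _
    have hinner : ⟪w t, wd t⟫ ≤ δ * f t := by
      rw [hwdeq]
      calc ⟪w t, mulVecE (D * A) (w t)⟫ ≤ mu2 (D * A) * ‖w t‖^2 := inner_le_mu2 _ _
        _ ≤ δ * ‖w t‖^2 := by
            apply mul_le_mul_of_nonneg_right _ (sq_nonneg _)
            exact mu2_le_deltaStar hm0 A hDmem
        _ = δ * f t := by rw [eft]
    linarith
  have hgron := le_gronwallBound_of_liminf_deriv_right_le (f' := fun t => 2 * ⟪w t, wd t⟫)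
    hcont
    (fun t ht r hr =>
      ((hfderiv t (Set.Ico_subset_Icc_self ht)).hasDerivWithinAt.liminf_right_slope_le hr))
    (le_refl (f 0)) hbound 1 (Set.right_mem_Icc.mpr zero_le_one)
  rw [gronwallBound_ε0] at hgron
  have hf1 : ‖w 1‖^2 ≤ ‖w 0‖^2 * Real.exp (2 * δ * (1 - 0)) := by
    have e0 : f 0 = ‖w 0‖^2 := real_inner_self_eq_norm_sq _
    have e1 : f 1 = ‖w 1‖^2 := real_inner_self_eq_norm_sq _
    calc ‖w 1‖^2 = f 1 := e1.symm
      _ ≤ f 0 * Real.exp (2 * δ * (1 - 0)) := hgron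
      _ = ‖w 0‖^2 * Real.exp (2 * δ * (1 - 0)) := by rw [e0]
  have hexp : Real.exp (2 * δ * (1 - 0)) = (Real.exp δ)^2 := by
    rw [sq, ← Real.exp_add]
    ring_nf
  show ‖w 1‖ ≤ Real.exp δ * ‖w 0‖
  apply sq_le_imp (norm_nonneg _) (by positivity)
  rw [mul_pow, ← hexp]
  calc ‖w 1‖^2 ≤ ‖w 0‖^2 * Real.exp (2 * δ * (1 - 0)) := hf1
    _ = Real.exp (2 * δ * (1 - 0)) * ‖w 0‖^2 := by ring

/-- Lipschitz bound for the classifier φ = softmax ∘ (A₂·+b₂) ∘ φ₁ ∘ (A₁·+b₁):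
‖φ(x) − φ(y)‖ ≤ e^{δ⋆} ‖A₂‖₂ ‖A₁‖₂ ‖x − y‖ with δ⋆ = sup_{D ∈ Ω_m} μ₂(D A). -/
theorem classifier_lipschitz_bound
    {n p q : ℕ} (m : ℝ) (hm0 : 0 < m) (hm1 : m ≤ 1)
    (σ : ℝ → ℝ) (hσ : Differentiable ℝ σ)
    (hσ' : ∀ s : ℝ, m ≤ deriv σ s ∧ deriv σ s ≤ 1)
    (A : Matrix (Fin n) (Fin n) ℝ) (b : EuclideanSpace ℝ (Fin n))
    (A₁ : Matrix (Fin n) (Fin p) ℝ) (b₁ : EuclideanSpace ℝ (Fin n))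
    (A₂ : Matrix (Fin q) (Fin n) ℝ) (b₂ : EuclideanSpace ℝ (Fin q))
    (x y : EuclideanSpace ℝ (Fin p))
    (u v : ℝ → EuclideanSpace ℝ (Fin n))
    (hu : ∀ t ∈ Set.Icc (0:ℝ) 1, HasDerivAt u (mapE σ (mulVecE A (u t) + b)) t)
    (hv : ∀ t ∈ Set.Icc (0:ℝ) 1, HasDerivAt v (mapE σ (mulVecE A (v t) + b)) t)
    (hu0 : u 0 = mulVecE A₁ x + b₁) (hv0 : v 0 = mulVecE A₁ y + b₁) :
    ‖softmaxE (mulVecE A₂ (u 1) + b₂) - softmaxE (mulVecE A₂ (v 1) + b₂)‖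
      ≤ Real.exp (sSup ((fun D => mu2 (D * A)) '' OmegaSet n m)) *
          specNorm A₂ * specNorm A₁ * ‖x - y‖ := by
  set δ := sSup ((fun D => mu2 (D * A)) '' OmegaSet n m) with hδ
  have hflow := flow_contraction m hm0 hm1 σ hσ hσ' A b u v hu hv
  have h0 : u 0 - v 0 = mulVecE A₁ (x - y) := by
    rw [hu0, hv0, mulVecE_sub]; abel
  calc ‖softmaxE (mulVecE A₂ (u 1) + b₂) - softmaxE (mulVecE A₂ (v 1) + b₂)‖
      ≤ ‖(mulVecE A₂ (u 1) + b₂) - (mulVecE A₂ (v 1) + b₂)‖ := softmaxE_lipschitz _ _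
    _ = ‖mulVecE A₂ (u 1 - v 1)‖ := by rw [mulVecE_sub]; congr 1; abel
    _ ≤ specNorm A₂ * ‖u 1 - v 1‖ := norm_mulVecE_le _ _
    _ ≤ specNorm A₂ * (Real.exp δ * ‖u 0 - v 0‖) :=
        mul_le_mul_of_nonneg_left hflow (specNorm_nonneg _)
    _ = specNorm A₂ * (Real.exp δ * ‖mulVecE A₁ (x - y)‖) := by rw [h0]
    _ ≤ specNorm A₂ * (Real.exp δ * (specNorm A₁ * ‖x - y‖)) := by
        apply mul_le_mul_of_nonneg_left _ (specNorm_nonneg _)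
        exact mul_le_mul_of_nonneg_left (norm_mulVecE_le _ _) (Real.exp_pos δ).le
    _ = Real.exp δ * specNorm A₂ * specNorm A₁ * ‖x - y‖ := by ring
end
end
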